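/- Let X = {X_0, …, X_{L−1}} be an (N,M,L)-FHS set over F with N ≥ 2, and let k be an integer with 2 ≤ k < L and k | L. For 0 ≤ i ≤ L/k − 1 define Y_i : Z_{kN} → F by Y_i(k·t_1 + t_0) = X_{ki + t_0}(t_1) for 0 ≤ t_0 ≤ k−1 and 0 ≤ t_1 ≤ N−1, and let Y = {Y_0, …, Y_{L/k−1}}, a (kN, M, L/k)-FHS set. If X has optimal AHC, then Y has optimal AHC. -/

import Mathlib

open Finset

/-- Periodic Hamming correlation of two FHSs `X, Y : ZMod N → F` at shift `τ`. -/
def Hcorr {N : ℕ} [NeZero N] {F : Type*} [DecidableEq F]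
    (X Y : ZMod N → F) (τ : ZMod N) : ℕ :=
  (Finset.univ.filter (fun t => X t = Y (t + τ))).card

/-- `N_X(a)`: number of occurrences of frequency `a` in the FHS `X`. -/
def countFreq {N : ℕ} [NeZero N] {F : Type*} [DecidableEq F]
    (X : ZMod N → F) (a : F) : ℕ :=
  (Finset.univ.filter (fun t => X t = a)).card

/-- `N_U(a)`: total number of occurrences of `a` in the FHS set `U`. -/
def countFreqSet {N L : ℕ} [NeZero N] {F : Type*} [DecidableEq F]
    (U : Fin L → ZMod N → F) (a : F) : ℕ :=
  ∑ i : Fin L, countFreq (U i) a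

/-- `S_a(U)`: sum of all out-of-phase Hamming autocorrelation values. -/
def Sa {N L : ℕ} [NeZero N] {F : Type*} [DecidableEq F]
    (U : Fin L → ZMod N → F) : ℕ :=
  ∑ i : Fin L, ∑ τ ∈ Finset.univ \ {(0 : ZMod N)}, Hcorr (U i) (U i) τ

/-- `S_c(U)`: sum of all Hamming crosscorrelation values (ordered pairs `i ≠ j`). -/
def Sc {N L : ℕ} [NeZero N] {F : Type*} [DecidableEq F]
    (U : Fin L → ZMod N → F) : ℕ :=
  ∑ i : Fin L, ∑ j ∈ Finset.univ \ {i}, ∑ τ : ZMod N, Hcorr (U i) (U j) τ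

/-- Average Hamming autocorrelation `A_a(U) = S_a(U)/(L(N-1))`. -/
def Aa {N L : ℕ} [NeZero N] {F : Type*} [DecidableEq F]
    (U : Fin L → ZMod N → F) : ℚ :=
  (Sa U : ℚ) / ((L : ℚ) * ((N : ℚ) - 1))

/-- Average Hamming crosscorrelation `A_c(U) = S_c(U)/(L(L-1)N)`. -/
def Ac {N L : ℕ} [NeZero N] {F : Type*} [DecidableEq F]
    (U : Fin L → ZMod N → F) : ℚ :=
  (Sc U : ℚ) / ((L : ℚ) * ((L : ℚ) - 1) * (N : ℚ))

/-- `H_a(U)`: maximum out-of-phase Hamming autocorrelation of the set `U`. -/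
def Ha {N L : ℕ} [NeZero N] {F : Type*} [DecidableEq F]
    (U : Fin L → ZMod N → F) : ℕ :=
  Finset.univ.sup fun i => (Finset.univ \ {(0 : ZMod N)}).sup fun τ => Hcorr (U i) (U i) τ

/-- `H_c(U)`: maximum Hamming crosscorrelation of the set `U`. -/
def Hc {N L : ℕ} [NeZero N] {F : Type*} [DecidableEq F]
    (U : Fin L → ZMod N → F) : ℕ :=
  Finset.univ.sup fun i => (Finset.univ \ {i}).sup fun j =>
    Finset.univ.sup fun τ => Hcorr (U i) (U j) τ

/-- `U` has optimal average Hamming correlation (meets the Peng et al. AHC bound with equality). -/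
def optimalAHC {N L : ℕ} [NeZero N] {F : Type*} [Fintype F] [DecidableEq F]
    (U : Fin L → ZMod N → F) : Prop :=
  Aa U / ((N : ℚ) * ((L : ℚ) - 1)) + Ac U / ((N : ℚ) - 1)
    = ((N : ℚ) * L - Fintype.card F) /
      ((Fintype.card F : ℚ) * ((N : ℚ) - 1) * ((L : ℚ) - 1))

/-- The cyclotomic class `C_r = {α^(Ml+r) : 0 ≤ l ≤ f-1}`. -/
def cycClass {F : Type*} [Monoid F] [DecidableEq F] (α : F) (M f r : ℕ) : Finset F :=
  (Finset.range f).image fun l => α ^ (M * l + r)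

/-- The cyclotomic number `(i,j)_M = |(C_i + 1) ∩ C_j|`. -/
def cycNum {F : Type*} [Field F] [DecidableEq F] (α : F) (M f i j : ℕ) : ℕ :=
  (((cycClass α M f i).image fun x => x + 1) ∩ cycClass α M f j).card


/-!
Counting, over all ordered pairs of sequences and all shifts, the coincidences of frequencies
gives `S_a(U) + S_c(U) + L N = ∑ₐ N_U(a)²`. Hence optimal AHC says exactly
`M ∑ₐ N_U(a)² = (L N)²`, which depends only on the frequency counts `N_U` and on `L N`.
Construction C only rearranges the `L N` positions of `X` into those of `Y` (position `t` of
`X_j` becomes position `k t + j mod k` of `Y_{j / k}`), so it preserves both.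
-/

section Correlation

variable {N : ℕ} [NeZero N] {F : Type*} [DecidableEq F]

theorem sum_Hcorr_eq_sum_countFreq_mul [Fintype F] (X Y : ZMod N → F) :
    ∑ τ, Hcorr X Y τ = ∑ a, countFreq X a * countFreq Y a := by
  calc ∑ τ, Hcorr X Y τ = ∑ t, countFreq Y (X t) := by
        simp only [Hcorr, countFreq, card_filter]
        rw [sum_comm]
        exact sum_congr rfl fun t _ =>
          Fintype.sum_equiv (Equiv.addLeft t) _ _ fun _ => by simp [eq_comm]
    _ = ∑ a, countFreq X a * countFreq Y a := by
        rw [← sum_fiberwise' univ X]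
        simp only [sum_const, smul_eq_mul, countFreq]

theorem Hcorr_self_zero (X : ZMod N → F) : Hcorr X X 0 = N := by
  simp [Hcorr]

theorem Sa_add_Sc_add_mul [Fintype F] {L : ℕ} (U : Fin L → ZMod N → F) :
    Sa U + Sc U + L * N = ∑ a, countFreqSet U a ^ 2 := by
  have hdiag : ∀ i, ∑ τ, Hcorr (U i) (U i) τ
      = ∑ τ ∈ univ \ {(0 : ZMod N)}, Hcorr (U i) (U i) τ + N := fun i => by
    rw [sum_eq_sum_sdiff_singleton_add (mem_univ 0), Hcorr_self_zero]
  have hrow : ∀ i, ∑ j, ∑ τ, Hcorr (U i) (U j) τ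
      = ∑ j ∈ univ \ {i}, ∑ τ, Hcorr (U i) (U j) τ + ∑ τ, Hcorr (U i) (U i) τ := fun i =>
    sum_eq_sum_sdiff_singleton_add (mem_univ i) _
  calc Sa U + Sc U + L * N = ∑ i, ∑ j, ∑ τ, Hcorr (U i) (U j) τ := by
        simp only [Sa, Sc, hrow, hdiag, sum_add_distrib, sum_const, card_univ,
          Fintype.card_fin, smul_eq_mul]
        ring
    _ = ∑ a, countFreqSet U a ^ 2 := by
        simp only [sum_Hcorr_eq_sum_countFreq_mul, countFreqSet, sq, sum_mul_sum]
        exact (sum_congr rfl fun i _ => sum_comm).trans sum_comm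

theorem optimalAHC_iff [Fintype F] {L : ℕ} (hN : 2 ≤ N) (hL : 2 ≤ L)
    (U : Fin L → ZMod N → F) :
    optimalAHC U ↔ (∑ a, (countFreqSet U a : ℚ) ^ 2) * Fintype.card F = ((L : ℚ) * N) ^ 2 := by
  have : Nonempty F := ⟨U ⟨0, by omega⟩ 0⟩
  have hF : (Fintype.card F : ℚ) ≠ 0 := by positivity
  have hN1 : (N : ℚ) - 1 ≠ 0 := by rw [sub_ne_zero]; norm_cast; omega
  have hL1 : (L : ℚ) - 1 ≠ 0 := by rw [sub_ne_zero]; norm_cast; omega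
  have hS : (Sa U : ℚ) + Sc U = ∑ a, (countFreqSet U a : ℚ) ^ 2 - L * N := by
    rw [eq_sub_iff_add_eq]; exact_mod_cast Sa_add_Sc_add_mul U
  rw [optimalAHC, Aa, Ac]
  field_simp
  rw [hS]
  constructor <;> intro h <;> linear_combination h

theorem countFreqSet_eq_card {L : ℕ} (U : Fin L → ZMod N → F) (a : F) :
    countFreqSet U a = #{p : Fin L × ZMod N | U p.1 p.2 = a} := by
  simp only [countFreqSet, countFreq, card_filter, Fintype.sum_prod_type]

theorem countFreqSet_eq_of_bijective {L N' L' : ℕ} [NeZero N'] {U : Fin L → ZMod N → F}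
    {V : Fin L' → ZMod N' → F} (e : Fin L × ZMod N → Fin L' × ZMod N')
    (he : Function.Bijective e) (hUV : ∀ p, V (e p).1 (e p).2 = U p.1 p.2) :
    countFreqSet V = countFreqSet U := by
  funext a
  rw [countFreqSet_eq_card, countFreqSet_eq_card]
  refine (card_nbij e (fun p hp => ?_) he.injective.injOn fun q hq => ?_).symm
  · simpa [hUV] using hp
  · obtain ⟨p, rfl⟩ := he.surjective q
    exact ⟨p, by simpa [hUV] using hq, rfl⟩

theorem optimalAHC_congr [Fintype F] {L N' L' : ℕ} [NeZero N'] {U : Fin L → ZMod N → F}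
    {V : Fin L' → ZMod N' → F} (hN : 2 ≤ N) (hL : 2 ≤ L) (hN' : 2 ≤ N') (hL' : 2 ≤ L')
    (hsize : L' * N' = L * N) (hcount : countFreqSet V = countFreqSet U) :
    optimalAHC V ↔ optimalAHC U := by
  rw [optimalAHC_iff hN hL, optimalAHC_iff hN' hL', hcount, ← Nat.cast_mul, ← Nat.cast_mul,
    hsize]

end Correlation

section Interleave

variable {k L : ℕ} (N : ℕ) (hdvd : k ∣ L)

def interleave (p : Fin L × ZMod N) : Fin (L / k) × ZMod (k * N) :=
  (⟨p.1 / k, Nat.div_lt_div_of_lt_of_dvd hdvd p.1.isLt⟩,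
    ((k * p.2.val + p.1 % k : ℕ) : ZMod (k * N)))

variable {N} [NeZero N]

theorem interleave_injective (hk : 0 < k) : Function.Injective (interleave N hdvd) := by
  rintro ⟨j, t⟩ ⟨j', t'⟩ h
  simp only [interleave, Prod.mk.injEq, Fin.mk.injEq, ZMod.natCast_eq_natCast_iff'] at h
  obtain ⟨hdiv, hpos⟩ := h
  have hlt : ∀ (s : ZMod N) (r : ℕ), r < k → k * s.val + r < k * N := fun s r hr => by
    nlinarith [s.val_lt]
  rw [Nat.mod_eq_of_lt (hlt t _ (j.val.mod_lt hk)), Nat.mod_eq_of_lt (hlt t' _ (j'.val.mod_lt hk))]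
    at hpos
  have hmod : j.val % k = j'.val % k := by
    simpa [Nat.mul_add_mod, Nat.mod_mod] using congrArg (· % k) hpos
  have hval : t.val = t'.val := by
    rw [hmod, add_left_inj] at hpos
    exact Nat.eq_of_mul_eq_mul_left hk hpos
  refine Prod.ext (Fin.ext ?_) (ZMod.val_injective N hval)
  rw [← Nat.div_add_mod j.val k, ← Nat.div_add_mod j'.val k, hdiv, hmod]

variable [NeZero (k * N)]

theorem interleave_bijective (hk : 0 < k) : Function.Bijective (interleave N hdvd) := by
  refine (Fintype.bijective_iff_injective_and_card _).2 ⟨interleave_injective hdvd hk, ?_⟩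
  simp only [Fintype.card_prod, Fintype.card_fin, ZMod.card, ← mul_assoc, Nat.div_mul_cancel hdvd]

end Interleave

theorem constructionC_optimal_AHC_general (N L k : ℕ) [NeZero N] [NeZero (k * N)] (hN : 2 ≤ N)
    (hkL : k < L) (hdvd : k ∣ L)
    {F : Type*} [Fintype F] [DecidableEq F]
    (X : Fin L → ZMod N → F) (Y : Fin (L / k) → ZMod (k * N) → F)
    (hY : ∀ (i : Fin (L / k)) (t0 t1 : ℕ), t0 < k → t1 < N →
      ∀ (hidx : k * (i : ℕ) + t0 < L),
      Y i ((k * t1 + t0 : ℕ) : ZMod (k * N)) = X ⟨k * (i : ℕ) + t0, hidx⟩ ((t1 : ℕ) : ZMod N))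
    (hX : optimalAHC X) : optimalAHC Y := by
  have hk : 0 < k := Nat.pos_of_dvd_of_pos hdvd (by omega)
  have hLk : 2 ≤ L / k := by
    obtain ⟨m, rfl⟩ := hdvd
    rw [Nat.mul_div_cancel_left m hk]
    nlinarith
  have hYX : ∀ p, Y (interleave N hdvd p).1 (interleave N hdvd p).2 = X p.1 p.2 := by
    rintro ⟨j, t⟩
    simpa [interleave, Nat.div_add_mod] using hY (interleave N hdvd (j, t)).1 (j % k) t.val
      (j.val.mod_lt hk) t.val_lt (by simp [interleave, Nat.div_add_mod])
  refine (optimalAHC_congr hN (by omega) (by nlinarith) hLk ?_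
    (countFreqSet_eq_of_bijective _ (interleave_bijective hdvd hk) hYX)).2 hX
  rw [← mul_assoc, Nat.div_mul_cancel hdvd]

/-- Corollary 15 (Construction C). -/
theorem constructionC_optimal_AHC (N L k : ℕ) [NeZero N] [NeZero (k * N)] (hN : 2 ≤ N)
    (hk2 : 2 ≤ k) (hkL : k < L) (hdvd : k ∣ L)
    {F : Type*} [Fintype F] [DecidableEq F]
    (X : Fin L → ZMod N → F) (Y : Fin (L / k) → ZMod (k * N) → F)
    (hY : ∀ (i : Fin (L / k)) (t0 t1 : ℕ), t0 < k → t1 < N →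
      ∀ (hidx : k * (i : ℕ) + t0 < L),
      Y i ((k * t1 + t0 : ℕ) : ZMod (k * N)) = X ⟨k * (i : ℕ) + t0, hidx⟩ ((t1 : ℕ) : ZMod N))
    (hX : optimalAHC X) : optimalAHC Y :=
  constructionC_optimal_AHC_general N L k hN hkL hdvd X Y hY hX
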